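/- For every t > 0, the function x ↦ e^{−tx}·J₀(x) is integrable on [0,∞) and ∫₀^∞ e^{−tx}·J₀(x) dx = 1/√(1 + t²). (Equation (eq:laplace) of the paper.) -/

import Mathlib

open MeasureTheory Real

noncomputable def J0 (x : ℝ) : ℝ :=
  ∑' k : ℕ, (-1 : ℝ) ^ k * (x / 2) ^ (2 * k) / ((Nat.factorial k : ℝ)) ^ 2

noncomputable def J1 (x : ℝ) : ℝ :=
  ∑' k : ℕ, (-1 : ℝ) ^ k * (x / 2) ^ (2 * k + 1) /
    ((Nat.factorial k : ℝ) * (Nat.factorial (k + 1) : ℝ))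

/-!
Integrating the cosine series termwise against the Wallis integrals of `sin ^ (2k)` gives
Poisson's integral `J₀ x = π⁻¹ ∫₀^π cos (x sin θ) dθ`. Hence `|J₀| ≤ 1`, the Laplace
integral converges absolutely, and Fubini reduces it to `π⁻¹ ∫₀^π t / (t² + sin² θ) dθ`,
the inner integral being the Laplace transform of a cosine. An explicit primitive
evaluates the last integral to `π / √(1 + t²)`.
-/

open Set Nat

theorem integral_sin_pow_two_mul (k : ℕ) :
    ∫ θ in 0..π, sin θ ^ (2 * k) = π * (2 * k)! / (4 ^ k * (k ! : ℝ) ^ 2) := by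
  induction k with
  | zero => simp
  | succ k ih =>
    rw [show 2 * (k + 1) = 2 * k + 2 by ring, integral_sin_pow, ih, factorial_succ,
      factorial_succ, factorial_succ]
    push_cast
    simp only [sin_zero, sin_pi]
    field_simp
    ring

theorem integral_cos_series_term (x : ℝ) (k : ℕ) :
    ∫ θ in 0..π, (-1) ^ k * (x * sin θ) ^ (2 * k) / ((2 * k)! : ℝ) =
      π * ((-1) ^ k * (x / 2) ^ (2 * k) / (k ! : ℝ) ^ 2) := by
  simp_rw [mul_pow, ← mul_assoc, intervalIntegral.integral_div,
    intervalIntegral.integral_const_mul, integral_sin_pow_two_mul, div_pow, pow_mul]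
  field_simp
  ring

theorem J0_eq_integral (x : ℝ) : J0 x = π⁻¹ * ∫ θ in 0..π, cos (x * sin θ) := by
  have hsum : HasSum
      (fun k : ℕ => ∫ θ in 0..π, (-1) ^ k * (x * sin θ) ^ (2 * k) / ((2 * k)! : ℝ))
      (∫ θ in 0..π, cos (x * sin θ)) := by
    refine intervalIntegral.hasSum_integral_of_dominated_convergence
      (fun k _ => (x ^ 2) ^ k / (k ! : ℝ))
      (fun k => (by fun_prop : Continuous _).aestronglyMeasurable)
      (fun k => ae_of_all _ fun θ _ => ?_) (ae_of_all _ fun _ _ => summable_pow_div_factorial _)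
      intervalIntegrable_const (ae_of_all _ fun θ _ => hasSum_cos _)
    have hsq : (x * sin θ) ^ 2 ≤ x ^ 2 := by
      rw [mul_pow]; exact mul_le_of_le_one_right (sq_nonneg x) (sin_sq_le_one θ)
    rw [norm_div, norm_mul, norm_pow, norm_neg, norm_one, one_pow, one_mul, pow_mul,
      norm_of_nonneg (by positivity), Real.norm_natCast]
    gcongr
    omega
  simp_rw [integral_cos_series_term] at hsum
  rw [← hsum.tsum_eq, tsum_mul_left, J0, inv_mul_cancel_left₀ pi_ne_zero]

theorem continuous_J0 : Continuous J0 := by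
  rw [funext J0_eq_integral]
  exact continuous_const.mul
    (intervalIntegral.continuous_parametric_intervalIntegral_of_continuous' (by fun_prop) _ _)

theorem abs_J0_le_one (x : ℝ) : |J0 x| ≤ 1 := by
  have h : ‖∫ θ in 0..π, cos (x * sin θ)‖ ≤ 1 * |π - 0| :=
    intervalIntegral.norm_integral_le_of_norm_le_const fun θ _ => abs_cos_le_one _
  rw [sub_zero, abs_of_pos pi_pos, one_mul, norm_eq_abs] at h
  rw [J0_eq_integral, abs_mul, abs_inv, abs_of_pos pi_pos]
  exact inv_mul_le_one_of_le₀ h pi_pos.le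

theorem hasDerivAt_primitive_div_sq_add_sin_sq {t s : ℝ} (ht : 0 < t) (hs : 0 < s)
    (hst : s ^ 2 = 1 + t ^ 2) (θ : ℝ) :
    HasDerivAt
      (fun θ => (θ + arctan ((s - t) * sin θ * cos θ / (t * cos θ ^ 2 + s * sin θ ^ 2))) / s)
      (t / (t ^ 2 + sin θ ^ 2)) θ := by
  -- With `D = t cos² θ + s sin² θ` and `N = (s - t) sin θ cos θ` one has
  -- `D + N i = (t cos θ + s sin θ i) e^{-iθ}`, so this is a continuous branch of
  -- `arctan (s tan θ / t) / s`.
  have hcs := sin_sq_add_cos_sq θ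
  have hts : t < s := by nlinarith
  have hD : 0 < t * cos θ ^ 2 + s * sin θ ^ 2 := by
    have : t * cos θ ^ 2 + s * sin θ ^ 2 = t + (s - t) * sin θ ^ 2 := by
      linear_combination t * hcs
    rw [this]
    have := sub_pos.2 hts
    positivity
  have hN' : HasDerivAt (fun θ => (s - t) * sin θ * cos θ)
      ((s - t) * (cos θ ^ 2 - sin θ ^ 2)) θ := by
    refine (((hasDerivAt_sin θ).const_mul (s - t)).mul (hasDerivAt_cos θ)).congr_deriv ?_
    ring
  have hD' : HasDerivAt (fun θ => t * cos θ ^ 2 + s * sin θ ^ 2)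
      (2 * (s - t) * sin θ * cos θ) θ := by
    refine ((((hasDerivAt_cos θ).pow 2).const_mul t).add
      (((hasDerivAt_sin θ).pow 2).const_mul s)).congr_deriv ?_
    simp only [Nat.cast_ofNat, pow_one, Nat.add_one_sub_one]
    ring
  have hnorm : (t * cos θ ^ 2 + s * sin θ ^ 2) ^ 2 + ((s - t) * sin θ * cos θ) ^ 2 =
      t ^ 2 + sin θ ^ 2 := by
    linear_combination (t ^ 2 * cos θ ^ 2 + s ^ 2 * sin θ ^ 2 + t ^ 2) * hcs + sin θ ^ 2 * hst
  refine (((hasDerivAt_id θ).add (hN'.div hD' hD.ne').arctan).div_const s).congr_deriv ?_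
  have hsq : 1 + ((s - t) * sin θ * cos θ / (t * cos θ ^ 2 + s * sin θ ^ 2)) ^ 2 =
      (t ^ 2 + sin θ ^ 2) / (t * cos θ ^ 2 + s * sin θ ^ 2) ^ 2 := by
    rw [← hnorm]; field_simp
  have hnum : t ^ 2 + sin θ ^ 2 +
      ((s - t) * (cos θ ^ 2 - sin θ ^ 2) * (t * cos θ ^ 2 + s * sin θ ^ 2) -
        (s - t) * sin θ * cos θ * (2 * (s - t) * sin θ * cos θ)) = s * t := by
    linear_combination ((s - t) * (t * cos θ ^ 2 - s * sin θ ^ 2) + s * t - t ^ 2) * hcs -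
      sin θ ^ 2 * hst
  rw [Pi.div_apply, hsq]
  generalize t * cos θ ^ 2 + s * sin θ ^ 2 = D at hD hnum ⊢
  field_simp
  linear_combination hnum

theorem integral_exp_neg_mul_cos_Ioi {t : ℝ} (ht : 0 < t) (b : ℝ) :
    ∫ x in Ioi 0, exp (-t * x) * cos (b * x) = t / (t ^ 2 + b ^ 2) := by
  have ha : (-t + b * Complex.I).re < 0 := by simpa using ht
  have hre : ∀ x : ℝ,
      exp (-t * x) * cos (b * x) = (Complex.exp ((-t + b * Complex.I) * x)).re := by
    intro x
    rw [Complex.exp_re]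
    simp
  simp_rw [hre, ← RCLike.re_to_complex]
  rw [integral_re (integrableOn_exp_mul_complex_Ioi ha 0), integral_exp_mul_complex_Ioi ha 0]
  simp [Complex.div_re, Complex.normSq, sq]

theorem integral_div_sq_add_sin_sq {t : ℝ} (ht : 0 < t) :
    ∫ θ in 0..π, t / (t ^ 2 + sin θ ^ 2) = π / √(1 + t ^ 2) := by
  have hs : 0 < √(1 + t ^ 2) := by positivity
  have hst : √(1 + t ^ 2) ^ 2 = 1 + t ^ 2 := sq_sqrt (by positivity)
  have hcont : Continuous fun θ => t / (t ^ 2 + sin θ ^ 2) :=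
    continuous_const.div (by fun_prop) fun θ => by positivity
  rw [intervalIntegral.integral_eq_sub_of_hasDerivAt
    (fun θ _ => hasDerivAt_primitive_div_sq_add_sin_sq ht hs hst θ)
    (hcont.intervalIntegrable _ _)]
  simp

theorem integral_exp_neg_mul_J0_Ioi {t : ℝ} (ht : 0 < t) :
    ∫ x in Ioi 0, exp (-t * x) * J0 x = 1 / √(1 + t ^ 2) := by
  have hprod : Integrable (fun p : ℝ × ℝ => exp (-t * p.1) * cos (p.1 * sin p.2))
      ((volume.restrict (Ioi 0)).prod (volume.restrict (Ioc 0 π))) :=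
    ((exp_neg_integrableOn_Ioi 0 ht).comp_fst _).mul_bdd
      (by fun_prop : Continuous _).aestronglyMeasurable (ae_of_all _ fun p => abs_cos_le_one _)
  calc ∫ x in Ioi 0, exp (-t * x) * J0 x
      = π⁻¹ * ∫ x in Ioi 0, ∫ θ in Ioc 0 π, exp (-t * x) * cos (x * sin θ) := by
        rw [← integral_const_mul]
        refine setIntegral_congr_fun measurableSet_Ioi fun x _ => ?_
        rw [J0_eq_integral, intervalIntegral.integral_of_le pi_pos.le, integral_const_mul]
        ring
    _ = π⁻¹ * ∫ θ in Ioc 0 π, ∫ x in Ioi 0, exp (-t * x) * cos (x * sin θ) := by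
        rw [integral_integral_swap hprod]
    _ = π⁻¹ * ∫ θ in 0..π, t / (t ^ 2 + sin θ ^ 2) := by
        simp_rw [intervalIntegral.integral_of_le pi_pos.le, mul_comm _ (sin _),
          integral_exp_neg_mul_cos_Ioi ht]
    _ = 1 / √(1 + t ^ 2) := by
        rw [integral_div_sq_add_sin_sq ht]
        field_simp

/-- Equation (eq:laplace): for `t > 0`, `∫₀^∞ e^{-tx} J₀(x) dx = 1/√(1+t²)`. -/
theorem laplace_transform_J0 (t : ℝ) (ht : 0 < t) :
    IntegrableOn (fun x : ℝ => Real.exp (-t * x) * J0 x) (Set.Ici 0) ∧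
    ∫ x in Set.Ici (0 : ℝ), Real.exp (-t * x) * J0 x =
      1 / Real.sqrt (1 + t ^ 2) := by
  refine ⟨?_, ?_⟩
  · rw [integrableOn_Ici_iff_integrableOn_Ioi]
    exact (exp_neg_integrableOn_Ioi 0 ht).mul_bdd continuous_J0.aestronglyMeasurable
      (ae_of_all _ abs_J0_le_one)
  · rw [integral_Ici_eq_integral_Ioi]
    exact integral_exp_neg_mul_J0_Ioi ht
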